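/- For every fixed positive integer m, the sum S_{m,ℓ} is increasing in ℓ on the range 0 ≤ ℓ < ⌊m/2⌋; that is, for all integers ℓ, ℓ' with 0 ≤ ℓ < ℓ' < ⌊m/2⌋ one has S_{m,ℓ} ≤ S_{m,ℓ'}. -/

import Mathlib

open Finset

private lemma chooseH2 (n r : ℕ) :
    n.choose (r+2) * ((r+2)*(r+1)) = n.choose r * ((n-r)*(n-r-1)) := by
  have a := Nat.choose_succ_right_eq n (r+1)
  have b := Nat.choose_succ_right_eq n r
  have h : n - (r+1) = n - r - 1 := by omega
  calc n.choose (r+2) * ((r+2)*(r+1)) = (n.choose (r+2) * (r+2))*(r+1) := by ring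
    _ = (n.choose (r+1) * (n-(r+1)))*(r+1) := by rw [a]
    _ = (n.choose (r+1) * (r+1))*(n-(r+1)) := by ring
    _ = (n.choose r * (n-r))*(n-(r+1)) := by rw [b]
    _ = n.choose r * ((n-r)*(n-r-1)) := by rw [h]; ring

private lemma chooseH1 (n r : ℕ) :
    (n+2).choose (r+2) * ((r+2)*(r+1)) = n.choose r * ((n+2)*(n+1)) := by
  have a := Nat.add_one_mul_choose_eq (n+1) (r+1)
  have b := Nat.add_one_mul_choose_eq n r
  calc (n+2).choose (r+2) * ((r+2)*(r+1)) = ((n+2).choose (r+2)*(r+2))*(r+1) := by ring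
    _ = ((n+1+1) * ((n+1).choose (r+1)))*(r+1) := by rw [← a]
    _ = (n+2) * ((n+1).choose (r+1)*(r+1)) := by ring
    _ = (n+2) * ((n+1) * n.choose r) := by rw [← b]
    _ = n.choose r * ((n+2)*(n+1)) := by ring

private lemma chooseH3 (n r : ℕ) :
    (n+1).choose (r+2) * ((r+2)*(r+1)) = n.choose r * ((n+1)*(n-r)) := by
  have a := Nat.choose_succ_right_eq (n+1) (r+1)
  have b := Nat.add_one_mul_choose_eq n r
  have h : n + 1 - (r+1) = n - r := by omega
  calc (n+1).choose (r+2) * ((r+2)*(r+1)) = ((n+1).choose (r+2)*(r+2))*(r+1) := by ring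
    _ = ((n+1).choose (r+1) * (n+1-(r+1)))*(r+1) := by rw [a]
    _ = ((n+1).choose (r+1) * (r+1))*(n+1-(r+1)) := by ring
    _ = ((n+1) * n.choose r)*(n+1-(r+1)) := by rw [← b]
    _ = n.choose r * ((n+1)*(n-r)) := by rw [h]; ring

private lemma polyIneq (c d e : ℕ) :
    ((c+d+4+e)*(d+1)) * (((2*c+6+2*e)*(2*c+5+2*e)) * ((2*c+8+2*e)*(2*c+7+2*e)))
      ≤ 4*(((c+4+e)*(c+3+e))*((c+4+e)*(c+3+e))) * ((3*c+4*d+6+e)*(3*c+4*d+5+e)) := by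
  have h45 : ((2*c+6+2*e)*(2*c+5+2*e)) * ((2*c+8+2*e)*(2*c+7+2*e))
      ≤ 16 * (((c+4+e)*(c+3+e))*((c+4+e)*(c+3+e))) := by nlinarith [sq_nonneg (c+e)]
  have h12 : 4*((c+d+4+e)*(d+1)) ≤ (3*c+4*d+6+e)*(3*c+4*d+5+e) := by
    nlinarith [sq_nonneg (c+e+3), Nat.zero_le (c*d), Nat.zero_le (d*d)]
  calc ((c+d+4+e)*(d+1)) * (((2*c+6+2*e)*(2*c+5+2*e)) * ((2*c+8+2*e)*(2*c+7+2*e)))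
      ≤ ((c+d+4+e)*(d+1)) * (16 * (((c+4+e)*(c+3+e))*((c+4+e)*(c+3+e)))) :=
        Nat.mul_le_mul_left _ h45
    _ = (4*((c+d+4+e)*(d+1))) * (4*(((c+4+e)*(c+3+e))*((c+4+e)*(c+3+e)))) := by ring
    _ ≤ ((3*c+4*d+6+e)*(3*c+4*d+5+e)) * (4*(((c+4+e)*(c+3+e))*((c+4+e)*(c+3+e)))) :=
        Nat.mul_le_mul_right _ h12
    _ = 4*(((c+4+e)*(c+3+e))*((c+4+e)*(c+3+e))) * ((3*c+4*d+6+e)*(3*c+4*d+5+e)) := by ring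

private lemma keyR (c d e : ℕ) :
    ((c+d+4+e).choose (c+4+e) : ℝ) * ((3*c+4*d+4+e).choose (2*c+4*d) : ℝ)
        * ((4*c+4*d+8+2*e).choose (2*c+4*d+4) : ℝ)
      ≤ 4 * (((c+d+3+e).choose (c+2+e) : ℝ) * ((3*c+4*d+6+e).choose (2*c+4*d+4) : ℝ)
        * ((4*c+4*d+8+2*e).choose (2*c+4*d) : ℝ)) := by
  -- identities
  have h0A := chooseH3 (c+d+3+e) (c+2+e)
  rw [show c+d+3+e-(c+2+e) = d+1 from by omega,
      show c+d+3+e+1 = c+d+4+e from by omega,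
      show c+2+e+2 = c+4+e from by omega,
      show c+2+e+1 = c+3+e from by omega] at h0A
  have h0B1 := chooseH1 (3*c+4*d+4+e) (2*c+4*d+2)
  rw [show 3*c+4*d+4+e+2 = 3*c+4*d+6+e from by omega,
      show 2*c+4*d+2+2 = 2*c+4*d+4 from by omega,
      show 2*c+4*d+2+1 = 2*c+4*d+3 from by omega,
      show 3*c+4*d+4+e+1 = 3*c+4*d+5+e from by omega] at h0B1
  have h0B2 := chooseH2 (3*c+4*d+4+e) (2*c+4*d)
  rw [show 3*c+4*d+4+e-(2*c+4*d) = c+4+e from by omega,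
      show c+4+e-1 = c+3+e from by omega] at h0B2
  have h0C1 := chooseH2 (4*c+4*d+8+2*e) (2*c+4*d+2)
  rw [show 2*c+4*d+2+2 = 2*c+4*d+4 from by omega,
      show 2*c+4*d+2+1 = 2*c+4*d+3 from by omega,
      show 4*c+4*d+8+2*e-(2*c+4*d+2) = 2*c+6+2*e from by omega,
      show 2*c+6+2*e-1 = 2*c+5+2*e from by omega] at h0C1
  have h0C2 := chooseH2 (4*c+4*d+8+2*e) (2*c+4*d)
  rw [show 4*c+4*d+8+2*e-(2*c+4*d) = 2*c+8+2*e from by omega,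
      show 2*c+8+2*e-1 = 2*c+7+2*e from by omega] at h0C2
  have HA := congrArg (fun x : ℕ => (x : ℝ)) h0A
  have HB1 := congrArg (fun x : ℕ => (x : ℝ)) h0B1
  have HB2 := congrArg (fun x : ℕ => (x : ℝ)) h0B2
  have HC1 := congrArg (fun x : ℕ => (x : ℝ)) h0C1
  have HC2 := congrArg (fun x : ℕ => (x : ℝ)) h0C2
  push_cast at HA HB1 HB2 HC1 HC2
  have PI : (((c:ℝ)+(d:ℝ)+4+(e:ℝ))*((d:ℝ)+1)) * (((2*(c:ℝ)+6+2*(e:ℝ))*(2*(c:ℝ)+5+2*(e:ℝ))) * ((2*(c:ℝ)+8+2*(e:ℝ))*(2*(c:ℝ)+7+2*(e:ℝ))))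
      ≤ 4*(((((c:ℝ))+4+(e:ℝ))*((c:ℝ)+3+(e:ℝ)))*(((c:ℝ)+4+(e:ℝ))*((c:ℝ)+3+(e:ℝ)))) * ((3*(c:ℝ)+4*(d:ℝ)+6+(e:ℝ))*(3*(c:ℝ)+4*(d:ℝ)+5+(e:ℝ))) := by
    exact_mod_cast polyIneq c d e
  set a : ℝ := ((c+d+4+e).choose (c+4+e) : ℝ) with ha
  set a' : ℝ := ((c+d+3+e).choose (c+2+e) : ℝ) with ha'
  set b : ℝ := ((3*c+4*d+4+e).choose (2*c+4*d) : ℝ) with hb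
  set bm : ℝ := ((3*c+4*d+4+e).choose (2*c+4*d+2) : ℝ) with hbm
  set b' : ℝ := ((3*c+4*d+6+e).choose (2*c+4*d+4) : ℝ) with hb'
  set cn : ℝ := ((4*c+4*d+8+2*e).choose (2*c+4*d) : ℝ) with hcn
  set cm : ℝ := ((4*c+4*d+8+2*e).choose (2*c+4*d+2) : ℝ) with hcm
  set c' : ℝ := ((4*c+4*d+8+2*e).choose (2*c+4*d+4) : ℝ) with hc'
  set x : ℝ := (c : ℝ)
  set y : ℝ := (d : ℝ)
  set z : ℝ := (e : ℝ)
  have hP : (0:ℝ) < ((x+4+z)*(x+3+z)) * ((2*x+4*y+2)*(2*x+4*y+1)) * ((2*x+4*y+4)*(2*x+4*y+3)) := by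
    have hx : (0:ℝ) ≤ x := Nat.cast_nonneg _
    have hy : (0:ℝ) ≤ y := Nat.cast_nonneg _
    have hz : (0:ℝ) ≤ z := Nat.cast_nonneg _
    positivity
  rw [← mul_le_mul_iff_right₀ hP]
  have hann : (0:ℝ) ≤ a' * b * cn := by positivity
  calc ((x+4+z)*(x+3+z)) * ((2*x+4*y+2)*(2*x+4*y+1)) * ((2*x+4*y+4)*(2*x+4*y+3)) * (a*b*c')
      = (a'*b*cn) * (((x+y+4+z)*(y+1)) * (((2*x+6+2*z)*(2*x+5+2*z)) * ((2*x+8+2*z)*(2*x+7+2*z)))) := by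
        linear_combination (b*c'*((2*x+4*y+2)*(2*x+4*y+1))*((2*x+4*y+4)*(2*x+4*y+3)))*HA
          + (a'*((x+y+4+z)*(y+1))*b*((2*x+4*y+2)*(2*x+4*y+1)))*HC1
          + (a'*((x+y+4+z)*(y+1))*b*((2*x+6+2*z)*(2*x+5+2*z)))*HC2
    _ ≤ (a'*b*cn) * (4*(((x+4+z)*(x+3+z))*((x+4+z)*(x+3+z))) * ((3*x+4*y+6+z)*(3*x+4*y+5+z))) :=
        mul_le_mul_of_nonneg_left PI hann
    _ = ((x+4+z)*(x+3+z)) * ((2*x+4*y+2)*(2*x+4*y+1)) * ((2*x+4*y+4)*(2*x+4*y+3)) * (4*(a'*b'*cn)) := by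
        linear_combination (-(4*a'*cn*((x+4+z)*(x+3+z))*((2*x+4*y+2)*(2*x+4*y+1))))*HB1
          + (-(4*a'*cn*((x+4+z)*(x+3+z))*((3*x+4*y+6+z)*(3*x+4*y+5+z))))*HB2

private lemma aux_div (A B CN A' B' C' w p : ℝ) (hCN : 0 < CN) (hC' : 0 < C')
    (hp : 0 < p) (hw : 0 ≤ w) (h : A*B*C' ≤ 4*(A'*B'*CN)) :
    A*B*CN⁻¹*(w/(4*p)) ≤ A'*B'*C'⁻¹*(w/p) := by
  have e1 : A*B*CN⁻¹*(w/(4*p)) = (A*B*C')*(w/(4*p*CN*C')) := by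
    field_simp
  have e2 : A'*B'*C'⁻¹*(w/p) = (4*(A'*B'*CN))*(w/(4*p*CN*C')) := by
    field_simp
  rw [e1, e2]
  exact mul_le_mul_of_nonneg_right h (by positivity)

/-- `S m ℓ = ∑_{k=ℓ}^{2ℓ} C(m−ℓ, m−k) C(m+k, 2k) C(2m, 2k)⁻¹ (2ℓ+1−k)/2^{m−k}`. -/
noncomputable def S (m ℓ : ℕ) : ℝ :=
  ∑ k ∈ Finset.Icc ℓ (2 * ℓ),
    (Nat.choose (m - ℓ) (m - k) : ℝ) * (Nat.choose (m + k) (2 * k) : ℝ) *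
      ((Nat.choose (2 * m) (2 * k) : ℝ))⁻¹ * ((2 * (ℓ : ℝ) + 1 - k) / 2 ^ (m - k))

private lemma S_step (m ℓ : ℕ) (hm : 2*ℓ + 4 ≤ m) : S m ℓ ≤ S m (ℓ+1) := by
  unfold S
  calc ∑ k ∈ Finset.Icc ℓ (2 * ℓ),
        (Nat.choose (m - ℓ) (m - k) : ℝ) * (Nat.choose (m + k) (2 * k) : ℝ) *
          ((Nat.choose (2 * m) (2 * k) : ℝ))⁻¹ * ((2 * (ℓ : ℝ) + 1 - k) / 2 ^ (m - k))
      ≤ ∑ k ∈ Finset.Icc ℓ (2 * ℓ),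
        (Nat.choose (m - (ℓ+1)) (m - (k+2)) : ℝ) * (Nat.choose (m + (k+2)) (2 * (k+2)) : ℝ) *
          ((Nat.choose (2 * m) (2 * (k+2)) : ℝ))⁻¹ *
            ((2 * ((ℓ+1 : ℕ) : ℝ) + 1 - ((k+2 : ℕ) : ℝ)) / 2 ^ (m - (k+2))) := by
        apply Finset.sum_le_sum
        intro k hk
        simp only [Finset.mem_Icc] at hk
        obtain ⟨hlk, hk2⟩ := hk
        obtain ⟨d, rfl⟩ : ∃ d, k = ℓ + d := ⟨k - ℓ, by omega⟩
        obtain ⟨c, rfl⟩ : ∃ c, ℓ = c + d := ⟨ℓ - d, by omega⟩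
        obtain ⟨e, rfl⟩ : ∃ e, m = 2*c+2*d+4+e := ⟨m - (2*c+2*d+4), by omega⟩
        rw [show 2*c+2*d+4+e - (c+d) = c+d+4+e from by omega,
            show 2*c+2*d+4+e - (c+d+d) = c+4+e from by omega,
            show 2*c+2*d+4+e + (c+d+d) = 3*c+4*d+4+e from by omega,
            show 2*(c+d+d) = 2*c+4*d from by omega,
            show 2*(2*c+2*d+4+e) = 4*c+4*d+8+2*e from by omega,
            show 2*c+2*d+4+e - (c+d+1) = c+d+3+e from by omega,
            show 2*c+2*d+4+e - (c+d+d+2) = c+2+e from by omega,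
            show 2*c+2*d+4+e + (c+d+d+2) = 3*c+4*d+6+e from by omega,
            show 2*(c+d+d+2) = 2*c+4*d+4 from by omega,
            show (2*((c+d : ℕ):ℝ)+1-((c+d+d : ℕ):ℝ)) = (c:ℝ)+1 from by push_cast; ring,
            show (2*((c+d+1 : ℕ):ℝ)+1-((c+d+d+2 : ℕ):ℝ)) = (c:ℝ)+1 from by push_cast; ring,
            show (2:ℝ)^(c+4+e) = 4*((2:ℝ)^(c+2+e)) from by
              rw [show c+4+e = c+2+e+2 from by omega, pow_add]; ring]
        have hCN : (0:ℝ) < ((4*c+4*d+8+2*e).choose (2*c+4*d) : ℝ) := by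
          exact_mod_cast Nat.choose_pos (by omega)
        have hC' : (0:ℝ) < ((4*c+4*d+8+2*e).choose (2*c+4*d+4) : ℝ) := by
          exact_mod_cast Nat.choose_pos (by omega)
        exact aux_div _ _ _ _ _ _ _ _ hCN hC' (by positivity) (by positivity) (keyR c d e)
    _ = ∑ k ∈ Finset.Icc (ℓ+2) (2*ℓ+2),
        (Nat.choose (m - (ℓ+1)) (m - k) : ℝ) * (Nat.choose (m + k) (2 * k) : ℝ) *
          ((Nat.choose (2 * m) (2 * k) : ℝ))⁻¹ *
            ((2 * ((ℓ+1 : ℕ) : ℝ) + 1 - (k : ℝ)) / 2 ^ (m - k)) := by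
        rw [show Finset.Icc (ℓ+2) (2*ℓ+2) = Finset.map (addRightEmbedding 2) (Finset.Icc ℓ (2*ℓ)) from by
              rw [Finset.map_add_right_Icc],
            Finset.sum_map]
        simp [addRightEmbedding]
    _ ≤ ∑ k ∈ Finset.Icc (ℓ+1) (2*(ℓ+1)),
        (Nat.choose (m - (ℓ+1)) (m - k) : ℝ) * (Nat.choose (m + k) (2 * k) : ℝ) *
          ((Nat.choose (2 * m) (2 * k) : ℝ))⁻¹ *
            ((2 * ((ℓ+1 : ℕ) : ℝ) + 1 - (k : ℝ)) / 2 ^ (m - k)) := by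
        apply Finset.sum_le_sum_of_subset_of_nonneg
        · exact Finset.Icc_subset_Icc (by omega) (by omega)
        · intro i hi _
          simp only [Finset.mem_Icc] at hi
          have hi2 : (i:ℝ) ≤ 2*(ℓ:ℝ)+2 := by exact_mod_cast hi.2
          apply mul_nonneg
          apply mul_nonneg
          apply mul_nonneg
          · positivity
          · positivity
          · positivity
          · apply div_nonneg _ (by positivity)
            push_cast
            linarith

/-- For fixed `m`, the sum `S m ℓ` is increasing in `ℓ` on `0 ≤ ℓ < ⌊m/2⌋`. -/
theorem S_increasing (m ℓ ℓ' : ℕ) (hm : 1 ≤ m) (h1 : ℓ < ℓ') (h2 : ℓ' < m / 2) :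
    S m ℓ ≤ S m ℓ' := by
  have main : ∀ n, ℓ < n → n < m / 2 → S m ℓ ≤ S m n := by
    intro n
    induction n with
    | zero => omega
    | succ j ih =>
      intro hj1 hj2
      have hstep : 2*j + 4 ≤ m := by omega
      rcases Nat.lt_or_ge ℓ j with h | h
      · exact le_trans (ih h (by omega)) (S_step m j hstep)
      · have : ℓ = j := by omega
        subst this
        exact S_step m ℓ hstep
  exact main ℓ' h1 h2
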